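/- Let n ≥ 1, k ≥ 1, let A ∈ ℝ^{n×n} be exponentially stable in the sense that there exist constants C > 0 and ω > 0 such that ‖exp(tA)‖ ≤ C e^{−ωt} for all t ≥ 0, and let R : (ℝ^n)^k → ℝ be a multilinear map. Then for all z_1, …, z_k ∈ ℝ^n the function t ↦ R(exp(tA) z_1, …, exp(tA) z_k) is integrable on [0, ∞), and the multilinear map T defined by T(z_1, …, z_k) := −∫_0^∞ R(exp(tA) z_1, …, exp(tA) z_k) dt satisfies Σ_{i=1}^k T(z_1, …, z_{i−1}, A z_i, z_{i+1}, …, z_k) = R(z_1, …, z_k) for all z_1, …, z_k ∈ ℝ^n. -/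

import Mathlib

/-!
Along the flow `z ↦ exp(tA) z`, the Leibniz rule for multilinear maps gives
`d/dt R(exp(tA) z_1, …, exp(tA) z_k) = Σ_i R(exp(tA) z_1, …, exp(tA) A z_i, …, exp(tA) z_k)`.
Exponential stability makes the left-hand integrand `O(e^{-kωt})`, so every such integrand is
integrable on `[0, ∞)` and tends to `0`; the fundamental theorem of calculus on `[0, ∞)` then
integrates the derivative to `0 - R(z_1, …, z_k)`.
-/

open Matrix NormedSpace MeasureTheory

attribute [local instance] Matrix.linftyOpNormedAddCommGroup Matrix.linftyOpNormedSpace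
  Matrix.linftyOpNormedRing Matrix.linftyOpNormedAlgebra

open Asymptotics Filter Function Topology

theorem MultilinearMap.continuous_of_finiteDimensional {𝕜 ι F : Type*} {E : ι → Type*}
    [NontriviallyNormedField 𝕜] [CompleteSpace 𝕜] [Fintype ι]
    [∀ i, NormedAddCommGroup (E i)] [∀ i, NormedSpace 𝕜 (E i)] [∀ i, FiniteDimensional 𝕜 (E i)]
    [NormedAddCommGroup F] [NormedSpace 𝕜 F] (f : MultilinearMap 𝕜 E F) : Continuous f := by
  classical
  let b := fun i => Module.finBasis 𝕜 (E i)
  have hf : ⇑f = fun m => ∑ r : ∀ i, Fin (Module.finrank 𝕜 (E i)),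
      (∏ i, (b i).coord (r i) (m i)) • f fun i => b i (r i) := by
    funext m
    conv_lhs => rw [← funext fun i => (b i).sum_repr (m i)]
    simp only [f.map_sum, f.map_smul_univ, Module.Basis.coord_apply]
  have hcoord : ∀ i j, Continuous ((b i).coord j) := fun i j =>
    LinearMap.continuous_of_finiteDimensional _
  rw [hf]
  fun_prop

theorem HasDerivAt.multilinear_comp {𝕜 ι F : Type*} {E : ι → Type*}
    [NontriviallyNormedField 𝕜] [Fintype ι] [DecidableEq ι]
    [∀ i, NormedAddCommGroup (E i)] [∀ i, NormedSpace 𝕜 (E i)]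
    [NormedAddCommGroup F] [NormedSpace 𝕜 F] (f : ContinuousMultilinearMap 𝕜 E F)
    {g : ∀ i, 𝕜 → E i} {g' : ∀ i, E i} {t : 𝕜} (hg : ∀ i, HasDerivAt (g i) (g' i) t) :
    HasDerivAt (fun t => f fun i => g i t) (∑ i, f (update (fun j => g j t) i (g' i))) t := by
  simpa using (HasFDerivAt.multilinear_comp f fun i => (hg i).hasFDerivAt).hasDerivAt

theorem ContinuousMultilinearMap.isBigO_comp {𝕜 α ι F : Type*} {E : ι → Type*} {l : Filter α}
    [NontriviallyNormedField 𝕜] [Fintype ι] [∀ i, NormedAddCommGroup (E i)]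
    [∀ i, NormedSpace 𝕜 (E i)] [NormedAddCommGroup F] [NormedSpace 𝕜 F]
    (f : ContinuousMultilinearMap 𝕜 E F) {g : ∀ i, α → E i} {u : ι → α → ℝ}
    (hg : ∀ i, g i =O[l] u i) :
    (fun x => f fun i => g i x) =O[l] fun x => ∏ i, u i x := by
  have hf : (fun x => f fun i => g i x) =O[l] fun x => ∏ i, ‖g i x‖ :=
    .of_bound ‖f‖ <| .of_forall fun x => by
      simpa [Real.norm_eq_abs, Finset.abs_prod] using f.le_opNorm fun i => g i x
  exact hf.trans <| .finsetProd fun i _ => (hg i).norm_left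

theorem Asymptotics.IsBigO.matrix_mulVec_const {α 𝕜 m n : Type*} [NormedField 𝕜]
    [Fintype m] [Fintype n] {l : Filter α} {M : α → Matrix m n 𝕜} {u : α → ℝ} (hM : M =O[l] u)
    (v : n → 𝕜) :
    (fun x => M x *ᵥ v) =O[l] u :=
  (IsBigO.of_bound ‖v‖ <| .of_forall fun x => by
    simpa [mul_comm] using linfty_opNorm_mulVec (M x) v).trans hM

theorem HasDerivAt.matrix_mulVec_const {𝕜 m n : Type*} [NontriviallyNormedField 𝕜]
    [CompleteSpace 𝕜] [Fintype m] [Fintype n] {M : 𝕜 → Matrix m n 𝕜} {M' : Matrix m n 𝕜} {t : 𝕜}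
    (hM : HasDerivAt M M' t) (v : n → 𝕜) :
    HasDerivAt (fun t => M t *ᵥ v) (M' *ᵥ v) t :=
  let L := LinearMap.toContinuousLinearMap ((mulVecBilin 𝕜 𝕜).flip v)
  L.hasFDerivAt.comp_hasDerivAt (f := M) t hM

section ExpSmulMulVec

variable {n : Type*} [Fintype n] [DecidableEq n]

theorem hasDerivAt_exp_smul_mulVec {𝕂 : Type*} [RCLike 𝕂] (A : Matrix n n 𝕂) (v : n → 𝕂)
    (t : 𝕂) : HasDerivAt (fun t : 𝕂 => exp (t • A) *ᵥ v) (exp (t • A) *ᵥ (A *ᵥ v)) t :=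
  ((hasDerivAt_exp_smul_const A t).matrix_mulVec_const v).congr_deriv
    (mulVec_mulVec _ _ _).symm

theorem hasDerivAt_multilinear_exp_smul_mulVec {𝕂 ι F : Type*} [RCLike 𝕂] [Fintype ι]
    [DecidableEq ι] [NormedAddCommGroup F] [NormedSpace 𝕂 F] (A : Matrix n n 𝕂)
    (f : ContinuousMultilinearMap 𝕂 (fun _ : ι => n → 𝕂) F) (z : ι → n → 𝕂) (t : 𝕂) :
    HasDerivAt (fun t : 𝕂 => f fun i => exp (t • A) *ᵥ z i)
      (∑ i, f fun j => exp (t • A) *ᵥ update z i (A *ᵥ z i) j) t := by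
  convert HasDerivAt.multilinear_comp f fun i => hasDerivAt_exp_smul_mulVec A (z i) t using 3
  funext j
  exact apply_update (fun _ v => exp (t • A) *ᵥ v) z _ _ j

variable (A : Matrix n n ℝ) {C ω : ℝ}

theorem isBigO_exp_smul_mulVec
    (hA : ∀ t : ℝ, 0 ≤ t → ‖exp (t • A)‖ ≤ C * Real.exp (-ω * t)) (v : n → ℝ) :
    (fun t : ℝ => exp (t • A) *ᵥ v) =O[atTop] fun t => Real.exp (-ω * t) := by
  refine IsBigO.matrix_mulVec_const (.of_bound C ?_) v
  filter_upwards [eventually_ge_atTop 0] with t ht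
  simpa using hA t ht

theorem isBigO_multilinear_exp_smul_mulVec {ι F : Type*} [Fintype ι]
    [NormedAddCommGroup F] [NormedSpace ℝ F]
    (hA : ∀ t : ℝ, 0 ≤ t → ‖exp (t • A)‖ ≤ C * Real.exp (-ω * t))
    (f : ContinuousMultilinearMap ℝ (fun _ : ι => n → ℝ) F) (z : ι → n → ℝ) :
    (fun t : ℝ => f fun i => exp (t • A) *ᵥ z i) =O[atTop]
      fun t => Real.exp (-(Fintype.card ι * ω) * t) := by
  convert f.isBigO_comp fun i => isBigO_exp_smul_mulVec A hA (z i) using 2 with t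
  rw [Finset.prod_const, ← Real.exp_nat_mul, Finset.card_univ]
  ring_nf

end ExpSmulMulVec

theorem generalized_lyapunov_integral_solution_general
    (n k : ℕ) (hk : 1 ≤ k)
    (A : Matrix (Fin n) (Fin n) ℝ)
    (hstab : ∃ C > (0 : ℝ), ∃ ω > (0 : ℝ), ∀ t : ℝ, 0 ≤ t →
      ‖exp (t • A)‖ ≤ C * Real.exp (-ω * t))
    (R : MultilinearMap ℝ (fun _ : Fin k => (Fin n → ℝ)) ℝ) :
    (∀ z : Fin k → (Fin n → ℝ),
      IntegrableOn (fun t : ℝ => R (fun i => exp (t • A) *ᵥ z i)) (Set.Ici 0)) ∧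
    (∀ z : Fin k → (Fin n → ℝ),
      ∑ i, (-∫ t in Set.Ici (0 : ℝ),
          R (fun j => exp (t • A) *ᵥ (Function.update z i (A *ᵥ z i) j)))
        = R z) := by
  obtain ⟨C, -, ω, hω, hA⟩ := hstab
  let f : ContinuousMultilinearMap ℝ (fun _ : Fin k => Fin n → ℝ) ℝ :=
    ⟨R, R.continuous_of_finiteDimensional⟩
  have hderiv := hasDerivAt_multilinear_exp_smul_mulVec A f
  have hdecay := isBigO_multilinear_exp_smul_mulVec A hA f
  have hrate : 0 < (Fintype.card (Fin k) : ℝ) * ω :=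
    mul_pos (by rw [Fintype.card_fin]; exact_mod_cast hk) hω
  have hint (z : Fin k → Fin n → ℝ) :
      IntegrableOn (fun t : ℝ => f fun i => exp (t • A) *ᵥ z i) (Set.Ioi 0) :=
    integrable_of_isBigO_exp_neg hrate
      (fun t _ => (hderiv z t).continuousAt.continuousWithinAt) (hdecay z)
  refine ⟨fun z => by rw [integrableOn_Ici_iff_integrableOn_Ioi]; exact hint z, fun z => ?_⟩
  have hlim : Tendsto (fun t : ℝ => f fun i => exp (t • A) *ᵥ z i) atTop (𝓝 0) :=
    (hdecay z).trans_tendsto <| Real.tendsto_exp_atBot.comp <|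
      tendsto_id.const_mul_atTop_of_neg (neg_lt_zero.2 hrate)
  have hftc := integral_Ioi_of_hasDerivAt_of_tendsto' (fun t _ => hderiv z t)
    (integrable_finsetSum _ fun i _ => hint _) hlim
  rw [integral_finsetSum _ fun i _ => hint _, zero_smul, exp_zero] at hftc
  simp only [one_mulVec, zero_sub] at hftc
  simp only [integral_Ici_eq_integral_Ioi, Finset.sum_neg_distrib, neg_eq_iff_eq_neg]
  exact hftc

/-- Explicit integral solution of the generalized Lyapunov equation of order `k`:
for exponentially stable `A`, `t ↦ R(exp(tA)z_1,…,exp(tA)z_k)` is integrable on `[0,∞)`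
and `T(z) := −∫_0^∞ R(exp(tA)z_1,…,exp(tA)z_k) dt` satisfies
`Σ_i T(z_1,…,Az_i,…,z_k) = R(z_1,…,z_k)`. -/
theorem generalized_lyapunov_integral_solution
    (n k : ℕ) (hn : 1 ≤ n) (hk : 1 ≤ k)
    (A : Matrix (Fin n) (Fin n) ℝ)
    (hstab : ∃ C > (0 : ℝ), ∃ ω > (0 : ℝ), ∀ t : ℝ, 0 ≤ t →
      ‖exp (t • A)‖ ≤ C * Real.exp (-ω * t))
    (R : MultilinearMap ℝ (fun _ : Fin k => (Fin n → ℝ)) ℝ) :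
    (∀ z : Fin k → (Fin n → ℝ),
      IntegrableOn (fun t : ℝ => R (fun i => exp (t • A) *ᵥ z i)) (Set.Ici 0)) ∧
    (∀ z : Fin k → (Fin n → ℝ),
      ∑ i, (-∫ t in Set.Ici (0 : ℝ),
          R (fun j => exp (t • A) *ᵥ (Function.update z i (A *ᵥ z i) j)))
        = R z) :=
  generalized_lyapunov_integral_solution_general n k hk A hstab R
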